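/- Let B_Z(C) be the bosonic extension of a symmetrizable generalized Cartan matrix C. There exists a q-antilinear antiautomorphism D of B_Z(C), i.e. an additive bijection satisfying D(ab) = D(b)D(a), D(λ·x) = bar(λ)·D(x) for λ ∈ Q(q) (where bar(q) = q^{-1}), determined by D(E_{i,n}) = E_{i,n+1} for all i ∈ I, n ∈ Z. -/

import Mathlib

/-! **Statement 14.** The bosonic extension `B_ℤ(C)` admits a `q`-antilinear
antiautomorphism `D` determined by `D(E_{i,n}) = E_{i,n+1}`. -/

noncomputable section

open scoped BigOperators

/-- The field `ℚ(q)`. -/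
abbrev QF : Type := RatFunc ℚ

/-- The quantum integer `[n]_t = (tⁿ - t⁻ⁿ)/(t - t⁻¹)`. -/
def qInt (t : QF) (n : ℕ) : QF := (t ^ n - t⁻¹ ^ n) / (t - t⁻¹)

/-- The quantum factorial `[n]_t!`. -/
def qFact (t : QF) (n : ℕ) : QF := ∏ m ∈ Finset.range n, qInt t (m + 1)

/-- The quantum binomial coefficient `binom(n, m)_t`. -/
def qBinom (t : QF) (n m : ℕ) : QF := qFact t n / (qFact t m * qFact t (n - m))

variable {I : Type}

/-- The quantum Serre element
`∑_{m=0}^{1-C_{ij}} (-1)^m binom(1-C_{ij}, m)_{q_i} e_i^m e_j e_i^{1-C_{ij}-m}`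
attached to a family `e` of elements of a `ℚ(q)`-algebra `A`. -/
def serreElem (A : Type) [Ring A] [Algebra QF A] (C : I → I → ℤ) (d : I → ℕ)
    (e : I → A) (i j : I) : A :=
  ∑ m ∈ Finset.range ((1 - C i j).toNat + 1),
    (((-1 : QF) ^ m * qBinom (RatFunc.X ^ d i) (1 - C i j).toNat m) •
      (e i ^ m * e j * e i ^ ((1 - C i j).toNat - m)))

/-- The defining relations of the bosonic extension `B_ℤ(C)`: quantum Serre relations among
the `E_{i,n}` for each fixed `n`, and the relations
`E_{i,n+m} E_{j,n} = q_i^{(-1)^m C_{ij}} E_{j,n} E_{i,n+m} + δ_{(i,j),(m,1)}/(1-q_i²)`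
for `m ≥ 1`. -/
inductive BosonZRel (C : I → I → ℤ) (d : I → ℕ) [DecidableEq I] :
    FreeAlgebra QF (I × ℤ) → FreeAlgebra QF (I × ℤ) → Prop
  | serre (n : ℤ) (i j : I) (h : i ≠ j) :
      BosonZRel C d
        (serreElem (FreeAlgebra QF (I × ℤ)) C d (fun l => FreeAlgebra.ι QF (l, n)) i j) 0
  | boson (i j : I) (n : ℤ) (m : ℕ) (h : 1 ≤ m) :
      BosonZRel C d
        (FreeAlgebra.ι QF (i, n + m) * FreeAlgebra.ι QF (j, n))
        ((((RatFunc.X ^ d i : QF) ^ ((-1 : ℤ) ^ m * C i j)) •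
            (FreeAlgebra.ι QF (j, n) * FreeAlgebra.ι QF (i, n + m)))
          + (if i = j ∧ m = 1 then (1 - (RatFunc.X ^ d i : QF) ^ 2)⁻¹ else 0) • 1)

/-- The bosonic extension `B_ℤ(C)`. -/
def BosonZAlg (C : I → I → ℤ) (d : I → ℕ) [DecidableEq I] := RingQuot (BosonZRel C d)

instance (C : I → I → ℤ) (d : I → ℕ) [DecidableEq I] : Ring (BosonZAlg C d) :=
  inferInstanceAs (Ring (RingQuot (BosonZRel C d)))

instance (C : I → I → ℤ) (d : I → ℕ) [DecidableEq I] : Algebra QF (BosonZAlg C d) :=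
  inferInstanceAs (Algebra QF (RingQuot (BosonZRel C d)))

/-- The generator `E_{i,n}` of `B_ℤ(C)`. -/
def bzE (C : I → I → ℤ) (d : I → ℕ) [DecidableEq I] (i : I) (n : ℤ) : BosonZAlg C d :=
  RingQuot.mkAlgHom QF (BosonZRel C d) (FreeAlgebra.ι QF (i, n))

/-! The shift `E_{i,n} ↦ E_{i,n+1}`, extended `bar`-semilinearly and antimultiplicatively to the
free algebra, lands in `B_ℤ(C)ᵐᵒᵖ` and kills the defining relations. The image of a quantum Serre
element is `(-1)^N` times the Serre element one level up: its coefficients are bar-invariant, and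
reversing the monomials is undone by the symmetry `binom(N, m) = binom(N, N - m)`. The image of
`x y = c y x + δ` is `y' x' = bar c • x' y' + bar δ`, which is the relation one level up solved for
`y' x'`, because `bar c = c⁻¹` and `bar δ = -c⁻¹ δ`; for `δ = 1/(1 - q_i²)` the latter says
`bar δ = -q_i² δ`, which is where `C_ii = 2` enters. The same construction with `bar⁻¹` and the
shift `-1` is a two-sided inverse. -/

open MulOpposite

section QuantumBinomial

variable {F : Type} [FunLike F QF QF] [RingHomClass F QF QF] {β : F} {t : QF}

theorem map_qInt (hβ : β t = t⁻¹) (n : ℕ) : β (qInt t n) = qInt t n := by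
  rw [qInt, map_div₀, map_sub, map_sub, map_pow, map_pow, map_inv₀, hβ, inv_inv,
    ← neg_div_neg_eq, neg_sub, neg_sub]

theorem map_qFact (hβ : β t = t⁻¹) (n : ℕ) : β (qFact t n) = qFact t n := by
  simp only [qFact, map_prod, map_qInt hβ]

theorem map_qBinom (hβ : β t = t⁻¹) (n m : ℕ) : β (qBinom t n m) = qBinom t n m := by
  simp only [qBinom, map_div₀, map_mul, map_qFact hβ]

end QuantumBinomial

theorem qBinom_symm (t : QF) {n m : ℕ} (hm : m ≤ n) : qBinom t n (n - m) = qBinom t n m := by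
  rw [qBinom, qBinom, Nat.sub_sub_self hm, mul_comm]

theorem inv_one_sub_inv_sq {K : Type*} [Field K] {t : K} (ht : t ≠ 0) :
    (1 - t⁻¹ ^ 2)⁻¹ = -(t ^ 2 * (1 - t ^ 2)⁻¹) := by
  have h : 1 - t⁻¹ ^ 2 = -(t ^ 2)⁻¹ * (1 - t ^ 2) := by
    field_simp
    ring
  rw [h, mul_inv, inv_neg, inv_inv, neg_mul]

section Serre

variable {A B : Type} [Ring A] [Algebra QF A] [Ring B] [Algebra QF B]

theorem sum_qBinom_smul_reflect (t : QF) (N : ℕ) (x y : A) :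
    ∑ m ∈ Finset.range (N + 1), ((-1 : QF) ^ m * qBinom t N m) • (x ^ (N - m) * y * x ^ m)
      = (-1 : QF) ^ N •
        ∑ m ∈ Finset.range (N + 1),
          ((-1 : QF) ^ m * qBinom t N m) • (x ^ m * y * x ^ (N - m)) := by
  rw [← Finset.sum_range_reflect, Finset.smul_sum]
  refine Finset.sum_congr rfl fun m hm => ?_
  have hmN : m ≤ N := Nat.lt_succ_iff.mp (Finset.mem_range.mp hm)
  rw [Nat.add_sub_cancel, Nat.sub_sub_self hmN, qBinom_symm t hmN, smul_smul,
    pow_sub₀ _ (by norm_num) hmN, ← inv_pow, inv_neg, inv_one, mul_assoc]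

theorem serreElem_op (C : I → I → ℤ) (d : I → ℕ) (e : I → A) (i j : I) :
    serreElem Aᵐᵒᵖ C d (op ∘ e) i j
      = (-1 : QF) ^ (1 - C i j).toNat • op (serreElem A C d e i j) := by
  rw [serreElem, serreElem, ← op_smul, ← sum_qBinom_smul_reflect, Finset.op_sum]
  refine Finset.sum_congr rfl fun m _ => ?_
  simp only [Function.comp_apply, op_smul, op_mul, op_pow, mul_assoc]

theorem map_serreElem (C : I → I → ℤ) (d : I → ℕ) (f : A →+* B) (β : QF →+* QF)
    (hf : ∀ (c : QF) (x : A), f (c • x) = β c • f x) (e : I → A) (i j : I)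
    (hβ : ∀ m, β (qBinom (RatFunc.X ^ d i) (1 - C i j).toNat m)
      = qBinom (RatFunc.X ^ d i) (1 - C i j).toNat m) :
    f (serreElem A C d e i j) = serreElem B C d (f ∘ e) i j := by
  simp only [serreElem, map_sum, hf, map_mul, map_pow, map_neg, map_one, hβ, Function.comp_apply]

theorem mul_eq_inv_smul_add_of_mul_eq {x y : A} {c δ : QF} (hc : c ≠ 0)
    (h : x * y = c • (y * x) + δ • 1) : y * x = c⁻¹ • (x * y) + (-(c⁻¹ * δ)) • 1 := by
  rw [h, smul_add, smul_smul, inv_mul_cancel₀ hc, one_smul, smul_smul, add_assoc, ← add_smul,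
    add_neg_cancel, zero_smul, add_zero]

end Serre

namespace FreeAlgebra

variable {R X A : Type*} [CommRing R] [Ring A] [Algebra R A]

def semilinearLift (β : R →+* R) (f : X → A) : FreeAlgebra R X →+* A :=
  letI := Algebra.compHom A β
  (lift R f : FreeAlgebra R X →ₐ[R] A)

theorem semilinearLift_ι (β : R →+* R) (f : X → A) (x : X) :
    semilinearLift β f (ι R x) = f x := by
  let := Algebra.compHom A β
  exact lift_ι_apply f x

theorem semilinearLift_smul (β : R →+* R) (f : X → A) (c : R) (x : FreeAlgebra R X) :
    semilinearLift β f (c • x) = β c • semilinearLift β f x := by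
  let := Algebra.compHom A β
  exact map_smul (lift R f) c x

end FreeAlgebra

section BosonicExtension

variable [DecidableEq I] (C : I → I → ℤ) (d : I → ℕ)

theorem bzE_serre (n : ℤ) {i j : I} (hij : i ≠ j) :
    serreElem (BosonZAlg C d) C d (fun l => bzE C d l n) i j = 0 := by
  have h := RingQuot.mkAlgHom_rel QF (BosonZRel.serre (C := C) (d := d) n i j hij)
  rw [map_zero] at h
  exact (map_serreElem C d (RingQuot.mkAlgHom QF (BosonZRel C d)).toRingHom (RingHom.id QF)
    (map_smul (RingQuot.mkAlgHom QF _)) _ i j fun _ => rfl).symm.trans h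

theorem bzE_boson (i j : I) (n : ℤ) {m : ℕ} (hm : 1 ≤ m) :
    bzE C d i (n + m) * bzE C d j n
      = ((RatFunc.X ^ d i : QF) ^ ((-1 : ℤ) ^ m * C i j)) • (bzE C d j n * bzE C d i (n + m))
        + (if i = j ∧ m = 1 then (1 - (RatFunc.X ^ d i : QF) ^ 2)⁻¹ else 0) • 1 := by
  have h := RingQuot.mkAlgHom_rel QF (BosonZRel.boson (C := C) (d := d) i j n m hm)
  simp only [map_add, map_mul, map_smul, map_one] at h
  exact h

theorem BosonZAlg.induction {motive : BosonZAlg C d → Prop}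
    (algebraMap : ∀ c, motive (algebraMap QF (BosonZAlg C d) c))
    (bzE : ∀ i n, motive (bzE C d i n))
    (mul : ∀ x y, motive x → motive y → motive (x * y))
    (add : ∀ x y, motive x → motive y → motive (x + y)) (x : BosonZAlg C d) : motive x := by
  obtain ⟨x, rfl⟩ := RingQuot.mkAlgHom_surjective QF (BosonZRel C d) x
  induction x using FreeAlgebra.induction with
  | grade0 c =>
    rw [AlgHom.commutes]
    exact algebraMap c
  | grade1 p => exact bzE p.1 p.2
  | mul a b ha hb =>
    rw [map_mul]
    exact mul _ _ ha hb
  | add a b ha hb =>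
    rw [map_add]
    exact add _ _ ha hb

def shiftOpFree (β : QF →+* QF) (k : ℤ) : FreeAlgebra QF (I × ℤ) →+* (BosonZAlg C d)ᵐᵒᵖ :=
  FreeAlgebra.semilinearLift β fun p => op (bzE C d p.1 (p.2 + k))

variable {C d}

theorem shiftOpFree_rel (hC2 : ∀ i, C i i = 2) {β : QF →+* QF} (hβ : β RatFunc.X = RatFunc.X⁻¹)
    (k : ℤ) ⦃x y : FreeAlgebra QF (I × ℤ)⦄ (h : BosonZRel C d x y) :
    shiftOpFree C d β k x = shiftOpFree C d β k y := by
  have hι (i : I) (n : ℤ) :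
      shiftOpFree C d β k (FreeAlgebra.ι QF (i, n)) = op (bzE C d i (n + k)) :=
    FreeAlgebra.semilinearLift_ι _ _ _
  have hsmul (c : QF) (x : FreeAlgebra QF (I × ℤ)) :
      shiftOpFree C d β k (c • x) = β c • shiftOpFree C d β k x :=
    FreeAlgebra.semilinearLift_smul _ _ _ _
  cases h with
  | serre n i j hij =>
    rw [map_serreElem C d _ β hsmul _ _ _ (map_qBinom (by rw [map_pow, hβ, inv_pow]) _),
      map_zero]
    have he : (shiftOpFree C d β k ∘ fun l => FreeAlgebra.ι QF (l, n))
        = op ∘ fun l => bzE C d l (n + k) := funext fun l => hι l n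
    rw [he, serreElem_op, bzE_serre C d _ hij, op_zero, smul_zero]
  | boson i j n m hm =>
    set c : QF := (RatFunc.X ^ d i) ^ ((-1 : ℤ) ^ m * C i j)
    set δ : QF := if i = j ∧ m = 1 then (1 - (RatFunc.X ^ d i : QF) ^ 2)⁻¹ else 0
    have hq : (RatFunc.X ^ d i : QF) ≠ 0 := pow_ne_zero _ RatFunc.X_ne_zero
    have hβq : β (RatFunc.X ^ d i) = (RatFunc.X ^ d i)⁻¹ := by rw [map_pow, hβ, inv_pow]
    have hβc : β c = c⁻¹ := by rw [map_zpow₀, hβq, inv_zpow]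
    have hβδ : β δ = -(c⁻¹ * δ) := by
      by_cases hij : i = j ∧ m = 1
      · obtain ⟨rfl, rfl⟩ := hij
        simp only [c, δ, and_self, if_true, hC2, map_inv₀, map_sub, map_one, map_pow, hβq]
        rw [inv_one_sub_inv_sq hq, pow_one, neg_one_mul, zpow_neg, inv_inv]
        norm_cast
      · simp only [δ, if_neg hij, map_zero, mul_zero, neg_zero]
    have hrel := bzE_boson C d i j (n + k) hm
    rw [show n + k + m = n + m + k by ring] at hrel
    simp only [map_add, map_mul, hsmul, hι, map_one, hβc, hβδ, ← op_mul, ← op_smul, ← op_one,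
      ← op_add]
    exact congrArg op (mul_eq_inv_smul_add_of_mul_eq (zpow_ne_zero _ hq) hrel)

variable (C d) in
def shiftOp (hC2 : ∀ i, C i i = 2) (β : QF →+* QF) (hβ : β RatFunc.X = RatFunc.X⁻¹) (k : ℤ) :
    BosonZAlg C d →+* (BosonZAlg C d)ᵐᵒᵖ :=
  RingQuot.lift ⟨shiftOpFree C d β k, shiftOpFree_rel hC2 hβ k⟩

variable (hC2 : ∀ i, C i i = 2) {β β' : QF →+* QF} (hβ : β RatFunc.X = RatFunc.X⁻¹)
  (hβ' : β' RatFunc.X = RatFunc.X⁻¹) (k k' : ℤ)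

theorem shiftOp_mk (x : FreeAlgebra QF (I × ℤ)) :
    shiftOp C d hC2 β hβ k (RingQuot.mkAlgHom QF (BosonZRel C d) x) = shiftOpFree C d β k x := by
  have hx : RingQuot.mkAlgHom QF (BosonZRel C d) x = RingQuot.mkRingHom (BosonZRel C d) x := by
    rw [← RingQuot.mkAlgHom_coe QF]
    rfl
  rw [hx]
  exact RingQuot.lift_mkRingHom_apply _ _ x

theorem shiftOp_bzE (i : I) (n : ℤ) :
    shiftOp C d hC2 β hβ k (bzE C d i n) = op (bzE C d i (n + k)) :=
  (shiftOp_mk hC2 hβ k _).trans (FreeAlgebra.semilinearLift_ι _ _ _)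

theorem shiftOp_algebraMap (c : QF) :
    shiftOp C d hC2 β hβ k (algebraMap QF (BosonZAlg C d) c)
      = op (algebraMap QF (BosonZAlg C d) (β c)) := by
  have hc : algebraMap QF (BosonZAlg C d) c
      = RingQuot.mkAlgHom QF (BosonZRel C d) (algebraMap QF _ c) :=
    ((RingQuot.mkAlgHom QF (BosonZRel C d)).commutes c).symm
  rw [hc, shiftOp_mk, Algebra.algebraMap_eq_smul_one, shiftOpFree,
    FreeAlgebra.semilinearLift_smul, map_one, Algebra.algebraMap_eq_smul_one, op_smul, op_one]

theorem shiftOp_smul (c : QF) (x : BosonZAlg C d) :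
    shiftOp C d hC2 β hβ k (c • x) = β c • shiftOp C d hC2 β hβ k x := by
  rw [Algebra.smul_def, map_mul, shiftOp_algebraMap, Algebra.smul_def,
    MulOpposite.algebraMap_apply]

theorem unop_shiftOp_shiftOp (hββ' : ∀ c, β' (β c) = c) (hkk' : k + k' = 0)
    (x : BosonZAlg C d) :
    unop (shiftOp C d hC2 β' hβ' k' (unop (shiftOp C d hC2 β hβ k x))) = x := by
  induction x using BosonZAlg.induction with
  | algebraMap c => rw [shiftOp_algebraMap, unop_op, shiftOp_algebraMap, unop_op, hββ']
  | bzE i n => rw [shiftOp_bzE, unop_op, shiftOp_bzE, unop_op, add_assoc, hkk', add_zero]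
  | mul a b ha hb => rw [map_mul, unop_mul, map_mul, unop_mul, ha, hb]
  | add a b ha hb => rw [map_add, unop_add, map_add, unop_add, ha, hb]

end BosonicExtension

theorem stmt_14_general [DecidableEq I] (C : I → I → ℤ) (d : I → ℕ)
    (hC2 : ∀ i, C i i = 2)
    (bar : QF ≃+* QF) (hbarq : bar RatFunc.X = RatFunc.X⁻¹) :
    ∃ D : BosonZAlg C d ≃+ BosonZAlg C d,
      (∀ a b : BosonZAlg C d, D (a * b) = D b * D a) ∧
      (∀ (c : QF) (x : BosonZAlg C d), D (c • x) = bar c • D x) ∧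
      (∀ (i : I) (n : ℤ), D (bzE C d i n) = bzE C d i (n + 1)) := by
  have hbar_symm : bar.symm RatFunc.X = RatFunc.X⁻¹ := by
    rw [bar.symm_apply_eq, map_inv₀, hbarq, inv_inv]
  let D := shiftOp C d hC2 (bar : QF →+* QF) hbarq 1
  let D' := shiftOp C d hC2 (bar.symm : QF →+* QF) hbar_symm (-1)
  refine ⟨{ toFun x := unop (D x)
            invFun x := unop (D' x)
            left_inv := unop_shiftOp_shiftOp hC2 hbarq hbar_symm 1 (-1) bar.symm_apply_apply
              (add_neg_cancel 1)
            right_inv := unop_shiftOp_shiftOp hC2 hbar_symm hbarq (-1) 1 bar.apply_symm_apply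
              (neg_add_cancel 1)
            map_add' a b := by rw [map_add, unop_add] },
    fun a b => by simp only [AddEquiv.coe_mk, Equiv.coe_fn_mk, map_mul, unop_mul],
    fun c x => congrArg unop (shiftOp_smul hC2 hbarq 1 c x),
    fun i n => congrArg unop (shiftOp_bzE hC2 hbarq 1 i n)⟩

/-- Given the bar involution of `ℚ(q)` (the `ℚ`-algebra automorphism with
`bar q = q⁻¹`), there exists a `q`-antilinear antiautomorphism `D` of `B_ℤ(C)`: an additive
bijection with `D(ab) = D(b)·D(a)`, `D(λ·x) = bar(λ)·D(x)`, and `D(E_{i,n}) = E_{i,n+1}`. -/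
theorem stmt_14 [DecidableEq I] (C : I → I → ℤ) (d : I → ℕ)
    (hC2 : ∀ i, C i i = 2) (hCneg : ∀ i j, i ≠ j → C i j ≤ 0)
    (hC0 : ∀ i j, C i j = 0 ↔ C j i = 0)
    (hd : ∀ i, 0 < d i)
    (hsym : ∀ i j, (d i : ℤ) * C i j = (d j : ℤ) * C j i)
    (bar : QF ≃+* QF) (hbarq : bar RatFunc.X = RatFunc.X⁻¹)
    (hbarQ : ∀ c : ℚ, bar (algebraMap ℚ QF c) = algebraMap ℚ QF c) :
    ∃ D : BosonZAlg C d ≃+ BosonZAlg C d,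
      (∀ a b : BosonZAlg C d, D (a * b) = D b * D a) ∧
      (∀ (c : QF) (x : BosonZAlg C d), D (c • x) = bar c • D x) ∧
      (∀ (i : I) (n : ℤ), D (bzE C d i n) = bzE C d i (n + 1)) :=
  stmt_14_general C d hC2 bar hbarq
end
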